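/- arXiv:2006.06301 — 2 statements merged into one kernel-verified Lean document; each statement's English description precedes it below -/
import Mathlib

section
/- Let B be a commutative ring and f₁,…,f_n a regular sequence in B. Then the Koszul complex K(B, f₁,…,f_n) is a resolution of B/(f₁,…,f_n): its homology vanishes in all degrees except degree 0, where it equals B/(f₁,…,f_n). -/
/-!
Identify `D` with contraction `∂` by `φ = Σ fᵢ xᵢ` on the exterior algebra and induct on `n`,
writing `Bⁿ⁺¹ = Bⁿ × B` and `e = (0, 1)`. Every `(k+1)`-form is uniquely `a + e ∧ b` with
`a, b` forms on `Bⁿ`, and `∂(a + e ∧ b) = (∂'a + fₙ₊₁ b) - e ∧ ∂'b`. For a cycle, `∂'b = 0` and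
`∂'a = -fₙ₊₁ b`, so `b = ∂'c`: by induction in positive degree, and in degree `0` because
`fₙ₊₁` is a nonzerodivisor modulo `(f₁, …, fₙ)`. Then `a + fₙ₊₁ c = ∂'A`, and `A - e ∧ c` is a
preimage. In degree `0`, `∂(⋀¹) = φ(Bⁿ) = (f₁, …, fₙ)`.
-/

open ExteriorAlgebra
open CliffordAlgebra (contractLeft contractLeft_ι_mul contractLeft_ι contractLeft_algebraMap
  contractLeft_contractLeft)

namespace ExteriorAlgebra

variable {R M N : Type*} [CommRing R] [AddCommGroup M] [Module R M] [AddCommGroup N] [Module R N]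

theorem mem_exteriorPower_zero_iff {x : ExteriorAlgebra R M} :
    x ∈ ⋀[R]^0 M ↔ ∃ r, algebraMap R _ r = x := by
  rw [exteriorPower, pow_zero, Submodule.mem_one]

theorem mem_exteriorPower_one_iff {x : ExteriorAlgebra R M} :
    x ∈ ⋀[R]^1 M ↔ ∃ m, ι R m = x := by
  rw [exteriorPower, pow_one, LinearMap.mem_range]

theorem ι_mul_mem_exteriorPower {k : ℕ} (m : M) {x : ExteriorAlgebra R M}
    (hx : x ∈ ⋀[R]^k M) : ι R m * x ∈ ⋀[R]^(k+1) M := by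
  simpa only [add_comm 1 k] using
    SetLike.mul_mem_graded (mem_exteriorPower_one_iff.mpr ⟨m, rfl⟩) hx

theorem map_mem_exteriorPower (g : M →ₗ[R] N) {k : ℕ} {x : ExteriorAlgebra R M}
    (hx : x ∈ ⋀[R]^k M) : map g x ∈ ⋀[R]^k N := by
  have : (⋀[R]^k M).map (map g).toLinearMap ≤ ⋀[R]^k N := by
    rw [exteriorPower, Submodule.map_pow, ← LinearMap.range_comp, map_comp_ι, LinearMap.range_comp]
    exact pow_le_pow_left' LinearMap.map_le_range k
  exact this ⟨x, hx, rfl⟩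

theorem contractLeft_map (d : Module.Dual R N) (g : M →ₗ[R] N) (x : ExteriorAlgebra R M) :
    contractLeft d (map g x) = map g (contractLeft (d ∘ₗ g) x) := by
  induction x using CliffordAlgebra.left_induction with
  | algebraMap r => simp [contractLeft_algebraMap]
  | add x y hx hy => simp [map_add, hx, hy]
  | ι_mul x m hx =>
    rw [map_mul, map_apply_ι, contractLeft_ι_mul, hx, contractLeft_ι_mul, map_sub, map_smul,
      map_mul, map_apply_ι, LinearMap.comp_apply]

theorem contractLeft_ιMulti (d : Module.Dual R M) {k : ℕ} (v : Fin (k+1) → M) :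
    contractLeft d (ιMulti R (k+1) v) =
      ∑ i : Fin (k+1), ((-1 : ℤ) ^ (i : ℕ)) •
        (d (v i) • ιMulti R k (fun l => v (i.succAbove l))) := by
  induction k with
  | zero => simp [ιMulti_succ_apply, ιMulti_zero_apply, Algebra.smul_def]
  | succ k ih =>
    rw [ιMulti_succ_apply, contractLeft_ι_mul, ih]
    conv_rhs => rw [Fin.sum_univ_succ]
    rw [Finset.mul_sum, sub_eq_add_neg, ← Finset.sum_neg_distrib]
    congr 1
    · simp [Matrix.vecTail, Function.comp_def]
    refine Finset.sum_congr rfl fun j _ => ?_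
    rw [ιMulti_succ_apply (fun l => v (Fin.succAbove j.succ l)), mul_smul_comm, mul_smul_comm,
      Fin.val_succ, pow_succ, mul_smul, neg_one_smul, smul_neg]
    simp [Matrix.vecTail, Function.comp_def, Fin.succ_succAbove_succ]

theorem contractLeft_mem_exteriorPower (d : Module.Dual R M) {k : ℕ} {x : ExteriorAlgebra R M}
    (hx : x ∈ ⋀[R]^(k+1) M) : contractLeft d x ∈ ⋀[R]^k M := by
  rw [← ιMulti_span_fixedDegree] at hx
  induction hx using Submodule.span_induction with
  | mem z hz =>
    obtain ⟨v, rfl⟩ := hz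
    rw [contractLeft_ιMulti]
    exact Submodule.sum_mem _ fun i _ => Submodule.smul_of_tower_mem _ _
      (Submodule.smul_mem _ _ (ιMulti_range R k (Set.mem_range_self _)))
  | zero => simp
  | add a b _ _ ha hb => rw [map_add]; exact Submodule.add_mem _ ha hb
  | smul r a _ ha => rw [map_smul]; exact Submodule.smul_mem _ r ha

theorem exists_contractLeft_eq_algebraMap_iff (d : Module.Dual R M) (r : R) :
    (∃ y ∈ ⋀[R]^1 M, contractLeft d y = algebraMap R _ r) ↔ r ∈ LinearMap.range d := by
  simp only [mem_exteriorPower_one_iff, exists_exists_eq_and, contractLeft_ι,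
    (algebraMap_leftInverse M).injective.eq_iff, LinearMap.mem_range]

end ExteriorAlgebra

section Koszul

variable {R M N : Type*} [CommRing R] [AddCommGroup M] [Module R M] [AddCommGroup N] [Module R N]

def koszulDiff (d : Module.Dual R M) (k : ℕ) : ⋀[R]^(k+1) M →ₗ[R] ⋀[R]^k M :=
  (contractLeft d ∘ₗ (⋀[R]^(k+1) M).subtype).codRestrict _
    fun x => contractLeft_mem_exteriorPower d x.2

@[simp]
theorem coe_koszulDiff (d : Module.Dual R M) {k : ℕ} (x : ⋀[R]^(k+1) M) :
    (koszulDiff d k x : ExteriorAlgebra R M) = contractLeft d x := rfl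

theorem eq_koszulDiff (d : Module.Dual R M) {k : ℕ} (D : ⋀[R]^(k+1) M →ₗ[R] ⋀[R]^k M)
    (hD : ∀ v : Fin (k+1) → M, (D (exteriorPower.ιMulti R (k+1) v) : ExteriorAlgebra R M) =
      ∑ i : Fin (k+1), ((-1 : ℤ) ^ (i : ℕ)) •
        (d (v i) • ιMulti R k (fun l => v (i.succAbove l)))) :
    D = koszulDiff d k := by
  ext v : 2
  exact Subtype.ext ((hD v).trans (contractLeft_ιMulti d v).symm)

theorem koszulDiff_comp_koszulDiff (d : Module.Dual R M) (k : ℕ) :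
    koszulDiff d k ∘ₗ koszulDiff d (k+1) = 0 := by
  ext v
  exact contractLeft_contractLeft d _

def IsKoszulAcyclic (d : Module.Dual R M) : Prop :=
  ∀ k, ∀ x ∈ ⋀[R]^(k+1) M, contractLeft d x = 0 → ∃ y ∈ ⋀[R]^(k+2) M, contractLeft d y = x

theorem IsKoszulAcyclic.ker_koszulDiff {d : Module.Dual R M} (h : IsKoszulAcyclic d) (k : ℕ) :
    LinearMap.ker (koszulDiff d k) = LinearMap.range (koszulDiff d (k+1)) := by
  refine le_antisymm (fun x hx => ?_)
    (LinearMap.range_le_ker_iff.mpr (koszulDiff_comp_koszulDiff d k))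
  obtain ⟨y, hy, hyx⟩ := h k x x.2 (congrArg Subtype.val (LinearMap.mem_ker.mp hx))
  exact ⟨⟨y, hy⟩, Subtype.ext hyx⟩

theorem zeroEquiv_comp_koszulDiff_zero (d : Module.Dual R M) :
    exteriorPower.zeroEquiv R M ∘ₗ koszulDiff d 0 ∘ₗ (exteriorPower.oneEquiv R M).symm.toLinearMap
      = d := by
  ext m
  rw [LinearMap.comp_apply, LinearMap.comp_apply, LinearEquiv.coe_coe, LinearEquiv.coe_coe,
    ← LinearEquiv.eq_symm_apply, exteriorPower.zeroEquiv_symm_apply,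
    exteriorPower.oneEquiv_symm_apply]
  ext
  simp [coe_koszulDiff, ιMulti_succ_apply, ιMulti_zero_apply, Algebra.smul_def]

noncomputable def koszulHomologyZeroEquiv (d : Module.Dual R M) :
    (⋀[R]^0 M ⧸ LinearMap.range (koszulDiff d 0)) ≃ₗ[R] (R ⧸ LinearMap.range d) :=
  Submodule.Quotient.equiv _ _ (exteriorPower.zeroEquiv R M) <| by
    conv_rhs => rw [← zeroEquiv_comp_koszulDiff_zero d, ← LinearMap.comp_assoc,
      LinearMap.range_comp_of_range_eq_top _ (LinearEquiv.range _)]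
    exact (LinearMap.range_comp _ _).symm

theorem isKoszulAcyclic_of_subsingleton [Subsingleton M] (d : Module.Dual R M) :
    IsKoszulAcyclic d := by
  have hι : LinearMap.range (ι R : M →ₗ[R] ExteriorAlgebra R M) = ⊥ := by
    rw [LinearMap.range_eq_bot, Subsingleton.elim (ι R) 0]
  intro k x hx _
  rw [exteriorPower, hι, pow_succ, Submodule.mul_bot, Submodule.mem_bot] at hx
  exact ⟨0, Submodule.zero_mem _, by rw [hx, map_zero]⟩

theorem IsKoszulAcyclic.comp_linearEquiv {d : Module.Dual R M} (h : IsKoszulAcyclic d)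
    (g : N ≃ₗ[R] M) : IsKoszulAcyclic (d ∘ₗ g.toLinearMap) := by
  intro k x hx hdx
  have hmap : ∀ y, map g.symm.toLinearMap (map g.toLinearMap y) = y := fun y => by
    rw [← AlgHom.comp_apply, map_comp_map, ← LinearEquiv.coe_trans, LinearEquiv.self_trans_symm,
      LinearEquiv.refl_toLinearMap, map_id, AlgHom.id_apply]
  obtain ⟨y, hy, hdy⟩ := h k _ (map_mem_exteriorPower g.toLinearMap hx)
    (by rw [contractLeft_map, hdx, map_zero])
  refine ⟨map g.symm.toLinearMap y, map_mem_exteriorPower _ hy, ?_⟩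
  rw [contractLeft_map, LinearMap.comp_assoc, ← LinearEquiv.coe_trans, LinearEquiv.symm_trans_self,
    LinearEquiv.refl_toLinearMap, LinearMap.comp_id, hdy, hmap]

end Koszul

section Prod

variable {R M : Type*} [CommRing R] [AddCommGroup M] [Module R M]

open LinearMap (inl fst snd coprod_inl coprod_apply fst_comp_inl snd_comp_inl)

theorem ι_mul_map_inl_add (m : M) (t : R) (a b : ExteriorAlgebra R M) :
    ι R ((m, t) : M × R) * (map (inl R M R) a + ι R ((0, 1) : M × R) * map (inl R M R) b) =
      map (inl R M R) (ι R m * a) + ι R ((0, 1) : M × R) * map (inl R M R) (t • a - ι R m * b) := by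
  have hsplit : ι R ((m, t) : M × R) = map (inl R M R) (ι R m) + t • ι R ((0, 1) : M × R) := by
    rw [map_apply_ι, ← map_smul, ← map_add]; simp
  have hswap : map (inl R M R) (ι R m) * ι R ((0, 1) : M × R) =
      -(ι R ((0, 1) : M × R) * map (inl R M R) (ι R m)) := by
    rw [map_apply_ι]
    exact eq_neg_of_add_eq_zero_left (ι_add_mul_swap _ _)
  rw [hsplit, map_mul, map_sub, map_smul, map_mul, add_mul, mul_add, mul_add, ← mul_assoc, hswap,
    smul_mul_assoc, smul_mul_assoc, ← mul_assoc (ι R _) (ι R _), ι_sq_zero, zero_mul, smul_zero,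
    mul_sub, mul_smul_comm, neg_mul, mul_assoc]
  abel

theorem exists_eq_map_inl_add_ι_mul_map_inl {k : ℕ} {x : ExteriorAlgebra R (M × R)}
    (hx : x ∈ ⋀[R]^(k+1) (M × R)) : ∃ a ∈ ⋀[R]^(k+1) M, ∃ b ∈ ⋀[R]^k M,
      x = map (inl R M R) a + ι R ((0, 1) : M × R) * map (inl R M R) b := by
  induction k generalizing x with
  | zero =>
    obtain ⟨⟨m, t⟩, rfl⟩ := mem_exteriorPower_one_iff.mp hx
    refine ⟨ι R m, mem_exteriorPower_one_iff.mpr ⟨m, rfl⟩, algebraMap R _ t,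
      mem_exteriorPower_zero_iff.mpr ⟨t, rfl⟩, ?_⟩
    simpa [← Algebra.commutes, ← Algebra.smul_def] using ι_mul_map_inl_add m t 1 0
  | succ k ih =>
    rw [exteriorPower, pow_succ'] at hx
    induction hx using Submodule.mul_induction_on' with
    | mem_mul_mem z hz y hy =>
      obtain ⟨⟨m, t⟩, rfl⟩ := hz
      obtain ⟨a, ha, b, hb, rfl⟩ := ih hy
      exact ⟨_, ι_mul_mem_exteriorPower m ha, _,
        Submodule.sub_mem _ (Submodule.smul_mem _ t ha) (ι_mul_mem_exteriorPower m hb),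
        ι_mul_map_inl_add m t a b⟩
    | add x y _ _ hx hy =>
      obtain ⟨a, ha, b, hb, rfl⟩ := hx
      obtain ⟨a', ha', b', hb', rfl⟩ := hy
      refine ⟨a + a', Submodule.add_mem _ ha ha', b + b', Submodule.add_mem _ hb hb', ?_⟩
      rw [map_add, map_add, mul_add]
      abel

theorem eq_zero_of_map_inl_add_ι_mul_map_inl_eq_zero {a b : ExteriorAlgebra R M}
    (h : map (inl R M R) a + ι R ((0, 1) : M × R) * map (inl R M R) b = 0) : a = 0 ∧ b = 0 := by
  have hinj : Function.Injective (map (inl R M R)) := map_injective ⟨fst R M R, fst_comp_inl R M R⟩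
  have hsnd (c : ExteriorAlgebra R M) : contractLeft (snd R M R) (map (inl R M R) c) = 0 := by
    rw [contractLeft_map, snd_comp_inl, map_zero, LinearMap.zero_apply, map_zero]
  have hb : map (inl R M R) b = 0 := by
    simpa [contractLeft_ι_mul, hsnd] using congrArg (contractLeft (snd R M R)) h
  rw [hb, mul_zero, add_zero] at h
  exact ⟨hinj (h.trans (map_zero _).symm), hinj (hb.trans (map_zero _).symm)⟩

theorem contractLeft_coprod_map_inl_add (d : Module.Dual R M) (r : R) (a b : ExteriorAlgebra R M) :
    contractLeft (d.coprod (r • LinearMap.id))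
        (map (inl R M R) a + ι R ((0, 1) : M × R) * map (inl R M R) b) =
      map (inl R M R) (contractLeft d a + r • b) -
        ι R ((0, 1) : M × R) * map (inl R M R) (contractLeft d b) := by
  simp only [map_add, contractLeft_ι_mul, contractLeft_map, coprod_inl, map_smul, coprod_apply,
    map_zero, LinearMap.smul_apply, LinearMap.id_apply, smul_eq_mul, mul_one, zero_add]
  abel

theorem IsKoszulAcyclic.coprod {d : Module.Dual R M} (h : IsKoszulAcyclic d) {r : R}
    (hr : ∀ β, r * β ∈ LinearMap.range d → β ∈ LinearMap.range d) :
    IsKoszulAcyclic (d.coprod (r • LinearMap.id)) := by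
  intro k x hx hdx
  obtain ⟨a, ha, b, hb, rfl⟩ := exists_eq_map_inl_add_ι_mul_map_inl hx
  rw [contractLeft_coprod_map_inl_add, sub_eq_add_neg, ← mul_neg, ← map_neg] at hdx
  obtain ⟨hab, hdb⟩ := eq_zero_of_map_inl_add_ι_mul_map_inl_eq_zero hdx
  obtain ⟨c, hc, hdc⟩ : ∃ c ∈ ⋀[R]^(k+1) M, contractLeft d c = b := by
    cases k with
    | zero =>
      obtain ⟨β, rfl⟩ := mem_exteriorPower_zero_iff.mp hb
      refine (exists_contractLeft_eq_algebraMap_iff d β).mpr (hr β ?_)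
      refine (exists_contractLeft_eq_algebraMap_iff d _).mp ⟨-a, neg_mem ha, ?_⟩
      rw [map_neg, eq_neg_of_add_eq_zero_left hab, neg_neg, Algebra.smul_def, map_mul]
    | succ k => exact h k b hb (neg_eq_zero.mp hdb)
  obtain ⟨A, hA, hdA⟩ := h k (a + r • c) (add_mem ha (Submodule.smul_mem _ r hc))
    (by rw [map_add, map_smul, hdc, hab])
  refine ⟨map (inl R M R) A + ι R ((0, 1) : M × R) * map (inl R M R) (-c),
    add_mem (map_mem_exteriorPower _ hA)
      (ι_mul_mem_exteriorPower _ (map_mem_exteriorPower _ (neg_mem hc))), ?_⟩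
  rw [contractLeft_coprod_map_inl_add, hdA, map_neg, hdc, smul_neg, add_neg_cancel_right, map_neg,
    mul_neg, sub_neg_eq_add]

end Prod

@[simps]
def Fin.initLastLinearEquiv (R M : Type*) [Semiring R] [AddCommMonoid M] [Module R M] (n : ℕ) :
    (Fin (n+1) → M) ≃ₗ[R] (Fin n → M) × M where
  toFun x := (Fin.init x, x (Fin.last n))
  invFun p := Fin.snoc p.1 p.2
  map_add' _ _ := rfl
  map_smul' _ _ := rfl
  left_inv x := Fin.snoc_init_self x
  right_inv p := by simp

section Regular

variable {R : Type*} [CommRing R]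

open RingTheory.Sequence

theorem Fintype.linearCombination_eq_coprod_comp_initLast {n : ℕ} (f : Fin (n+1) → R) :
    Fintype.linearCombination R f =
      (Fintype.linearCombination R (Fin.init f)).coprod (f (Fin.last n) • LinearMap.id) ∘ₗ
        (Fin.initLastLinearEquiv R R n).toLinearMap := by
  refine LinearMap.ext fun x => ?_
  simp [Fintype.linearCombination_apply, Fin.sum_univ_castSucc, Fin.init, mul_comm]

theorem RingTheory.Sequence.IsWeaklyRegular.of_ofFn_succ {n : ℕ} {f : Fin (n+1) → R}
    (h : IsWeaklyRegular R (List.ofFn f)) :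
    IsWeaklyRegular R (List.ofFn (Fin.init f)) ∧
      ∀ β, f (Fin.last n) * β ∈ Ideal.span (Set.range (Fin.init f)) →
        β ∈ Ideal.span (Set.range (Fin.init f)) := by
  rw [List.ofFn_succ', List.concat_eq_append, isWeaklyRegular_append_iff,
    isWeaklyRegular_singleton_iff] at h
  have hI : (Ideal.ofList (List.ofFn (Fin.init f)) • ⊤ : Submodule R R) =
      Ideal.span (Set.range (Fin.init f)) := by
    rw [smul_eq_mul, Ideal.mul_top, Ideal.ofList]
    congr 1
    ext
    simp [List.mem_ofFn]
  obtain ⟨hinit, hlast⟩ := h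
  refine ⟨hinit, fun β hβ => ?_⟩
  rw [← Fin.init_def, hI] at hlast
  rw [← Submodule.Quotient.mk_eq_zero] at hβ ⊢
  exact hlast (by dsimp only; rw [smul_zero, ← Submodule.Quotient.mk_smul, smul_eq_mul, hβ])

theorem RingTheory.Sequence.IsWeaklyRegular.isKoszulAcyclic :
    ∀ {n : ℕ} {f : Fin n → R}, IsWeaklyRegular R (List.ofFn f) →
      IsKoszulAcyclic (Fintype.linearCombination R f)
  | 0, _, _ => isKoszulAcyclic_of_subsingleton _
  | _ + 1, f, h => by
    obtain ⟨hinit, hlast⟩ := h.of_ofFn_succ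
    rw [Fintype.linearCombination_eq_coprod_comp_initLast]
    refine (hinit.isKoszulAcyclic.coprod ?_).comp_linearEquiv _
    simpa only [Fintype.range_linearCombination] using hlast

end Regular

/-- Koszul resolution: if `f₁,…,f_n` is a regular sequence in `B`, the Koszul complex
`K(B, f)` — with terms `Λ^k(Bⁿ)` and differential
`D(v₁∧⋯∧v_{k+1}) = Σ_i (-1)^{1+i} φ(vᵢ)·v₁∧⋯∧v̂ᵢ∧⋯∧v_{k+1}` where `φ(b) = Σ fᵢbᵢ` —
is a resolution of `B/(f₁,…,f_n)`: its homology vanishes in all degrees except degree `0`,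
where it equals `B/(f₁,…,f_n)`. -/
theorem stmt_12 (B : Type) [CommRing B] (n : ℕ) (f : Fin n → B)
    (hreg : RingTheory.Sequence.IsRegular B (List.ofFn f))
    (D : ∀ k : ℕ, (⋀[B]^(k+1) (Fin n → B)) →ₗ[B] (⋀[B]^k (Fin n → B)))
    (hD : ∀ (k : ℕ) (v : Fin (k+1) → (Fin n → B)),
      ((D k ⟨ExteriorAlgebra.ιMulti B (k+1) v,
          ExteriorAlgebra.ιMulti_range B (k+1) (Set.mem_range_self v)⟩ :
        ⋀[B]^k (Fin n → B)) : ExteriorAlgebra B (Fin n → B)) =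
        ∑ i : Fin (k+1), ((-1 : ℤ) ^ (i : ℕ)) •
          ((∑ j : Fin n, f j * v i j) •
            ExteriorAlgebra.ιMulti B k (fun l => v (i.succAbove l)))) :
    (∀ k : ℕ, LinearMap.ker (D k) = LinearMap.range (D (k+1))) ∧
      Nonempty (((⋀[B]^0 (Fin n → B)) ⧸ LinearMap.range (D 0)) ≃ₗ[B]
        (B ⧸ Ideal.span (Set.range f))) := by
  obtain rfl : D = koszulDiff (Fintype.linearCombination B f) :=
    funext fun k => eq_koszulDiff _ _ fun v => (hD k v).trans <| by
      simp only [Fintype.linearCombination_apply, smul_eq_mul, mul_comm]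
  exact ⟨hreg.toIsWeaklyRegular.isKoszulAcyclic.ker_koszulDiff,
    ⟨(koszulHomologyZeroEquiv _).trans
      (Submodule.quotEquivOfEq _ _ (Fintype.range_linearCombination B f))⟩⟩
end

section
/- Let B be a commutative ring, f ∈ B, and K(B,f) = B[ε] the Koszul dg algebra with dε = f, ε² = 0, ε in degree -1. For any strictly bounded complex (E, d) of B-modules with a degree -1 map h satisfying h² = 0 and dh + hd = f·id, the 'folding' (⊕_{i∈ℤ} E_{2i-1}, ⊕_{i∈ℤ} E_{2i}, d+h, d+h) is a matrix factorization of (B, f): the composites (d+h)∘(d+h) in both directions equal f·id. -/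
/-!
On the summand `E^(2i)` (resp. `E^(2i-1)`) the composite of the two foldings of `d + h` splits
by degree into `d²`, `dh + hd` and `h²`; the outer two vanish and the middle one is `f`. All the
work is in the bookkeeping of the transports `lcast` between indices such as `2(i+1) - 1` and
`2i + 1`: pushed outwards past `d` and `h`, the transports compose to a transport along `a = a`,
which is the identity.
-/

open DirectSum

/-- Transport of a graded component along an equality of indices. -/
def lcast {B : Type} [CommRing B] (E : ℤ → Type) [∀ i, AddCommGroup (E i)]
    [∀ i, Module B (E i)] {a b : ℤ} (hab : a = b) : E a ≃ₗ[B] E b :=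
  hab ▸ LinearEquiv.refl B (E a)

section lcast

variable {B : Type} [CommRing B] {E : ℤ → Type} [∀ i, AddCommGroup (E i)] [∀ i, Module B (E i)]

@[simp]
lemma lcast_self {a : ℤ} (e : a = a) (x : E a) : lcast (B := B) E e x = x := rfl

@[simp]
lemma lcast_lcast {a b c : ℤ} (e₁ : a = b) (e₂ : b = c) (x : E a) :
    lcast (B := B) E e₂ (lcast (B := B) E e₁ x) = lcast (B := B) E (e₁.trans e₂) x := by
  subst e₁ e₂; rfl

lemma lof_eq_lof_lcast (φ : ℤ → ℤ) {j k : ℤ} (hjk : j = k) (x : E (φ j)) :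
    lof B ℤ (fun j => E (φ j)) j x =
      lof B ℤ (fun j => E (φ j)) k (lcast (B := B) E (congrArg φ hjk) x) := by
  subst hjk; rfl

end lcast

namespace KoszulDgModule

variable {B : Type} [CommRing B] {E : ℤ → Type} [∀ i, AddCommGroup (E i)] [∀ i, Module B (E i)]
  {f : B} {d : ∀ i : ℤ, E i →ₗ[B] E (i + 1)} {h : ∀ i : ℤ, E (i + 1) →ₗ[B] E i}

lemma d_lcast {a b : ℤ} (e : a = b) (x : E a) :
    d b (lcast (B := B) E e x) = lcast (B := B) E (congrArg (· + 1) e) (d a x) := by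
  subst e; rfl

lemma h_lcast {a b : ℤ} (e : a + 1 = b + 1) (x : E (a + 1)) :
    h b (lcast (B := B) E e x) = lcast (B := B) E (by omega) (h a x) := by
  obtain rfl : a = b := by omega
  rfl

lemma h_lcast_h (hh : ∀ i, h i ∘ₗ h (i + 1) = 0) {a b : ℤ} (e : a = b + 1) (x : E (a + 1)) :
    h b (lcast (B := B) E e (h a x)) = 0 := by
  subst e
  exact LinearMap.congr_fun (hh b) x

lemma h_d_add_lcast_d_h (hdh : ∀ i, d i ∘ₗ h i + h (i + 1) ∘ₗ d (i + 1) = f • LinearMap.id)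
    {n b : ℤ} (e : n = b + 1) (e' : b + 1 = n) (x : E n) :
    h n (d n x) + lcast (B := B) E e' (d b (h b (lcast (B := B) E e x))) = f • x := by
  subst e
  exact (add_comm _ _).trans (LinearMap.congr_fun (hdh b) x)

variable (d h) in
def foldEven : (⨁ i, E (2 * i)) →ₗ[B] ⨁ i, E (2 * i - 1) :=
  toModule B ℤ _ fun i =>
    lof B ℤ (fun j => E (2 * j - 1)) (i + 1) ∘ₗ
        (lcast E (show (2 * i + 1 : ℤ) = 2 * (i + 1) - 1 by ring)).toLinearMap ∘ₗ d (2 * i) +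
      lof B ℤ (fun j => E (2 * j - 1)) i ∘ₗ h (2 * i - 1) ∘ₗ
        (lcast E (show (2 * i : ℤ) = 2 * i - 1 + 1 by ring)).toLinearMap

variable (d h) in
def foldOdd : (⨁ i, E (2 * i - 1)) →ₗ[B] ⨁ i, E (2 * i) :=
  toModule B ℤ _ fun i =>
    lof B ℤ (fun j => E (2 * j)) i ∘ₗ
        (lcast E (show (2 * i - 1 + 1 : ℤ) = 2 * i by ring)).toLinearMap ∘ₗ d (2 * i - 1) +
      lof B ℤ (fun j => E (2 * j)) (i - 1) ∘ₗ
        (lcast E (show (2 * i - 2 : ℤ) = 2 * (i - 1) by ring)).toLinearMap ∘ₗ h (2 * i - 2) ∘ₗ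
        (lcast E (show (2 * i - 1 : ℤ) = 2 * i - 2 + 1 by ring)).toLinearMap

theorem foldOdd_comp_foldEven (hd : ∀ i, d (i + 1) ∘ₗ d i = 0)
    (hh : ∀ i, h i ∘ₗ h (i + 1) = 0)
    (hdh : ∀ i, d i ∘ₗ h i + h (i + 1) ∘ₗ d (i + 1) = f • LinearMap.id) :
    foldOdd d h ∘ₗ foldEven d h = f • LinearMap.id := by
  refine linearMap_ext B fun i => LinearMap.ext fun x => ?_
  have hdd (a : ℤ) (y : E a) : d (a + 1) (d a y) = 0 := LinearMap.congr_fun (hd a) y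
  simp only [foldEven, foldOdd, LinearMap.comp_apply, toModule_lof, LinearMap.add_apply, map_add,
    LinearEquiv.coe_coe, LinearMap.smul_apply, LinearMap.id_apply]
  rw [lof_eq_lof_lcast (fun j => 2 * j) (add_sub_cancel_right i 1)]
  simp only [lcast_lcast, d_lcast, h_lcast, lcast_self, hdd, h_lcast_h hh, map_zero, zero_add,
    add_zero]
  rw [← map_add, h_d_add_lcast_d_h hdh, map_smul]

theorem foldEven_comp_foldOdd (hd : ∀ i, d (i + 1) ∘ₗ d i = 0)
    (hh : ∀ i, h i ∘ₗ h (i + 1) = 0)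
    (hdh : ∀ i, d i ∘ₗ h i + h (i + 1) ∘ₗ d (i + 1) = f • LinearMap.id) :
    foldEven d h ∘ₗ foldOdd d h = f • LinearMap.id := by
  refine linearMap_ext B fun i => LinearMap.ext fun x => ?_
  have hdd (a : ℤ) (y : E a) : d (a + 1) (d a y) = 0 := LinearMap.congr_fun (hd a) y
  simp only [foldEven, foldOdd, LinearMap.comp_apply, toModule_lof, LinearMap.add_apply, map_add,
    LinearEquiv.coe_coe, LinearMap.smul_apply, LinearMap.id_apply]
  rw [lof_eq_lof_lcast (fun j => 2 * j - 1) (sub_add_cancel i 1)]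
  simp only [lcast_lcast, d_lcast, lcast_self, hdd, h_lcast_h hh, map_zero, zero_add, add_zero]
  rw [← map_add, h_d_add_lcast_d_h hdh, map_smul]

end KoszulDgModule

/-- Let `(E, d)` be a strictly bounded complex of `B`-modules equipped with a degree `-1`
map `h` satisfying `h² = 0` and `dh + hd = f·id` (a `K(B, f)`-dg module, where `d` and `h`
are recorded by their components `d i : Eⁱ → E^(i+1)` and `h i : E^(i+1) → Eⁱ`).  Then the
folding `(⊕_{i} E^(2i-1), ⊕_{i} E^(2i), d + h, d + h)` is a matrix factorization of
`(B, f)`: the composites `(d+h)∘(d+h)` in both directions equal `f·id`. -/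
theorem stmt_17 (B : Type) [CommRing B] (f : B)
    (E : ℤ → Type) [∀ i, AddCommGroup (E i)] [∀ i, Module B (E i)]
    (d : ∀ i : ℤ, E i →ₗ[B] E (i + 1))
    (h : ∀ i : ℤ, E (i + 1) →ₗ[B] E i)
    (hd : ∀ i, d (i + 1) ∘ₗ d i = 0)
    (hh : ∀ i, h i ∘ₗ h (i + 1) = 0)
    (hdh : ∀ i, d i ∘ₗ h i + h (i + 1) ∘ₗ d (i + 1) = f • LinearMap.id) :
    -- the even part `⊕ E^(2i)`, the odd part `⊕ E^(2i-1)`, and the two foldings of `d+h`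
    let M₀ := DirectSum ℤ (fun i => E (2 * i))
    let M₁ := DirectSum ℤ (fun i => E (2 * i - 1))
    let p₀ : M₀ →ₗ[B] M₁ :=
      DirectSum.toModule B ℤ M₁ (fun i =>
        ((DirectSum.lof B ℤ (fun j => E (2 * j - 1)) (i + 1)) ∘ₗ
            (lcast E (show (2 * i + 1 : ℤ) = 2 * (i + 1) - 1 by ring)).toLinearMap ∘ₗ
            d (2 * i)) +
        ((DirectSum.lof B ℤ (fun j => E (2 * j - 1)) i) ∘ₗ
            (h (2 * i - 1)) ∘ₗ
            (lcast E (show (2 * i : ℤ) = 2 * i - 1 + 1 by ring)).toLinearMap))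
    let p₁ : M₁ →ₗ[B] M₀ :=
      DirectSum.toModule B ℤ M₀ (fun i =>
        ((DirectSum.lof B ℤ (fun j => E (2 * j)) i) ∘ₗ
            (lcast E (show (2 * i - 1 + 1 : ℤ) = 2 * i by ring)).toLinearMap ∘ₗ
            d (2 * i - 1)) +
        ((DirectSum.lof B ℤ (fun j => E (2 * j)) (i - 1)) ∘ₗ
            (lcast E (show (2 * i - 2 : ℤ) = 2 * (i - 1) by ring)).toLinearMap ∘ₗ
            (h (2 * i - 2)) ∘ₗ
            (lcast E (show (2 * i - 1 : ℤ) = 2 * i - 2 + 1 by ring)).toLinearMap))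
    p₁ ∘ₗ p₀ = f • LinearMap.id ∧ p₀ ∘ₗ p₁ = f • LinearMap.id :=
  ⟨KoszulDgModule.foldOdd_comp_foldEven hd hh hdh, KoszulDgModule.foldEven_comp_foldOdd hd hh hdh⟩
end
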